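/- arXiv:1802.04512 — 15 statements merged into one kernel-verified Lean document; each statement's English description precedes it below -/
import Mathlib

section
/- Let ⊴ be the relation on finite sequences of naturals inductively generated by: (η) if a ∈ U then a ⊴ U; (ϝ) if a*n ⊴ U for all n ∈ ℕ, then a ⊴ U. Let ◁ be generated by η, ϝ, and additionally (ζ) if a ≤ b and b ◁ U then a ◁ U, where a ≤ b means b is an initial segment of a. Then a ◁ U if and only if a ⊴ ↓U, where ↓U is the downward closure of U under ≤. -/
/-!
Over a set `V` closed under extension, the ζ-free cover is already closed under ζ: a derivation
of `b ⊴ V` turns into one of `a ⊴ V` for any extension `a` of `b`, because each ϝ-step at a proper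
prefix of `a` can be replaced by the premise on the branch that `a` follows. Since `↓U` is closed
under extension, induction on `a ◁ U` gives `a ⊴ ↓U`. Conversely every element of `↓U` is
`◁ U`-covered by η and ζ, and ⊴-derivations over `↓U` then become ◁-derivations over `U`.
-/

/-- The formal Baire cover, generated by η, ζ, ϝ. -/
inductive BCov : List ℕ → Set (List ℕ) → Prop
  | eta {a : List ℕ} {U : Set (List ℕ)} : a ∈ U → BCov a U
  | zeta {a b : List ℕ} {U : Set (List ℕ)} : b <+: a → BCov b U → BCov a U
  | digamma {a : List ℕ} {U : Set (List ℕ)} : (∀ n : ℕ, BCov (a ++ [n]) U) → BCov a U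

/-- The ζ-free cover, generated by η and ϝ only. -/
inductive BCov0 : List ℕ → Set (List ℕ) → Prop
  | eta {a : List ℕ} {U : Set (List ℕ)} : a ∈ U → BCov0 a U
  | digamma {a : List ℕ} {U : Set (List ℕ)} : (∀ n : ℕ, BCov0 (a ++ [n]) U) → BCov0 a U

/-- `↓U`: all extensions of elements of `U`. -/
def downClosure (U : Set (List ℕ)) : Set (List ℕ) := {c | ∃ b ∈ U, b <+: c}

lemma mem_downClosure_of_prefix {U : Set (List ℕ)} {c d : List ℕ} (hc : c ∈ downClosure U)
    (hcd : c <+: d) : d ∈ downClosure U :=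
  let ⟨b, hb, hbc⟩ := hc
  ⟨b, hb, hbc.trans hcd⟩

lemma BCov.of_mem_downClosure {U : Set (List ℕ)} {c : List ℕ} (hc : c ∈ downClosure U) :
    BCov c U :=
  let ⟨_, hb, hbc⟩ := hc
  BCov.zeta hbc (BCov.eta hb)

lemma BCov0.of_prefix {V : Set (List ℕ)}
    (hV : ∀ ⦃c d : List ℕ⦄, c ∈ V → c <+: d → d ∈ V) {a b : List ℕ}
    (hb : BCov0 b V) (hba : b <+: a) : BCov0 a V := by
  induction hb generalizing a with
  | eta hb => exact BCov0.eta (hV hb hba)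
  | @digamma b _ _ ih =>
    obtain ⟨t, rfl⟩ := hba
    cases t with
    | nil => exact BCov0.digamma fun n => ih n hV (by simp)
    | cons n t => exact ih n hV ⟨t, by simp⟩

lemma BCov0.toBCov {a : List ℕ} {U V : Set (List ℕ)} (ha : BCov0 a V)
    (hV : ∀ c ∈ V, BCov c U) : BCov a U := by
  induction ha with
  | eta hc => exact hV _ hc
  | digamma _ ih => exact BCov.digamma fun n => ih n hV

lemma BCov.toBCov0_downClosure {a : List ℕ} {U : Set (List ℕ)} (ha : BCov a U) :
    BCov0 a (downClosure U) := by
  induction ha with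
  | eta ha => exact BCov0.eta ⟨_, ha, List.prefix_rfl⟩
  | zeta hba _ ih => exact ih.of_prefix (fun _ _ => mem_downClosure_of_prefix) hba
  | digamma _ ih => exact BCov0.digamma ih

/-- Elimination of the ζ-rule: `a ◁ U` iff `a ⊴ ↓U`. -/
theorem zeta_elimination (a : List ℕ) (U : Set (List ℕ)) :
    BCov a U ↔ BCov0 a {c : List ℕ | ∃ b ∈ U, b <+: c} :=
  ⟨BCov.toBCov0_downClosure, fun h => h.toBCov fun _ => BCov.of_mem_downClosure⟩
end

section
/- Let ◁ be the formal Baire cover on finite sequences of naturals (generated by reflexivity, leftward closure under the prefix order, and the rule: if a*n ◁ U for all n then a ◁ U). Then for all finite sequences a, b: a ◁ {b} if and only if b is an initial segment of a. -/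
/-!
Every cover by a finite set is already witnessed by a prefix: the property "some element of `U`
is a prefix of `a`" is stable under η and ζ, and under ϝ as long as `U` is finite, since a
prefix of `a ++ [n]` is either a prefix of `a` or `a ++ [n]` itself, and a finite `U` cannot
contain all the successors `a ++ [n]`.
-/

namespace BCov

theorem of_prefix_mem {a u : List ℕ} {U : Set (List ℕ)} (hu : u ∈ U) (hua : u <+: a) :
    BCov a U :=
  zeta hua (eta hu)

theorem exists_prefix_mem_of_finite {a : List ℕ} {U : Set (List ℕ)} (hU : U.Finite)
    (h : BCov a U) : ∃ u ∈ U, u <+: a := by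
  induction h with
  | @eta a _ ha => exact ⟨a, ha, List.prefix_refl a⟩
  | zeta hba _ ih =>
    obtain ⟨u, hu, hub⟩ := ih hU
    exact ⟨u, hu, hub.trans hba⟩
  | @digamma a U _ ih =>
    by_contra! hnone
    have hsucc : ∀ n : ℕ, a ++ [n] ∈ U := fun n => by
      obtain ⟨u, hu, hun⟩ := ih n hU
      rcases List.prefix_concat_iff.mp hun with rfl | hua
      · exact hu
      · exact absurd hua (hnone u hu)
    exact Set.infinite_of_injective_forall_mem
      (fun m n hmn => by simpa using hmn) hsucc hU

theorem iff_exists_prefix_mem_of_finite {a : List ℕ} {U : Set (List ℕ)} (hU : U.Finite) :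
    BCov a U ↔ ∃ u ∈ U, u <+: a :=
  ⟨exists_prefix_mem_of_finite hU, fun ⟨_, hu, hua⟩ => of_prefix_mem hu hua⟩

end BCov

/-- `a ◁ {b}` iff `b` is an initial segment of `a`. -/
theorem cov_singleton_iff_prefix (a b : List ℕ) :
    BCov a ({b} : Set (List ℕ)) ↔ b <+: a := by
  simpa using BCov.iff_exists_prefix_mem_of_finite (a := a) (Set.finite_singleton b)
end

section
/- A subset α of ℕ* is an ideal point of the formal Baire space if and only if: (1) α is inhabited; (2) for all a, b ∈ α there exists c ∈ α with c ≤ a and c ≤ b; (3) if a*x ∈ α then a ∈ α; (4) if a ∈ α then there exists x ∈ ℕ with a*x ∈ α. -/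
/-- The greatest positivity compatible with the Baire cover (impredicative definition). -/
def BPos (a : List ℕ) (U : Set (List ℕ)) : Prop :=
  ∃ V : Set (List ℕ), a ∈ V ∧ V ⊆ U ∧
    ∀ W : Set (List ℕ), (∃ b ∈ V, BCov b W) → ∃ b ∈ V, b ∈ W

/-- Ideal points of the formal Baire space: inhabited, filtering, splitting the
cover and entering the positivity. -/
def IsIdealPoint (α : Set (List ℕ)) : Prop :=
  α.Nonempty ∧
  (∀ a b : List ℕ, a ∈ α → b ∈ α →
    ∃ c ∈ α, BCov c ({a} : Set (List ℕ)) ∧ BCov c ({b} : Set (List ℕ))) ∧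
  (∀ (a : List ℕ) (U : Set (List ℕ)), BCov a U → a ∈ α → ∃ b ∈ α, b ∈ U) ∧
  (∀ (a : List ℕ) (V : Set (List ℕ)), a ∈ α → α ⊆ V → BPos a V)

/-!
If every element of `U` extends `p`, so does every `a` with `a ◁ U`: the rule ϝ branches over
two distinct digits, so it cannot produce a longer common prefix. Hence `c ◁ {a}` is just
`a ≤ c`. Conversely, a set closed under prefixes and under some one-step extension meets every
cover of its elements, by induction on the derivation; such a set is then itself the witness
that each of its elements enters the positivity.
-/

theorem BCov.prefix_of_forall_prefix {a c : List ℕ} {U : Set (List ℕ)} (h : BCov c U)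
    (hU : ∀ b ∈ U, a <+: b) : a <+: c := by
  induction h with
  | eta hc => exact hU _ hc
  | zeta hb _ ih => exact (ih hU).trans hb
  | digamma _ ih =>
    rcases List.prefix_concat_iff.mp (ih 0 hU) with h0 | h0
    · rcases List.prefix_concat_iff.mp (ih 1 hU) with h1 | h1
      · simp [h0] at h1
      · exact h1
    · exact h0

theorem bcov_singleton_iff {a c : List ℕ} : BCov c {a} ↔ a <+: c :=
  ⟨fun h => h.prefix_of_forall_prefix fun _ hb => hb ▸ List.prefix_refl _,
    fun h => .zeta h (.eta rfl)⟩

section PrefixClosed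

variable {α : Set (List ℕ)}

theorem mem_of_prefix_of_mem (hparent : ∀ (a : List ℕ) (x : ℕ), a ++ [x] ∈ α → a ∈ α)
    {a b : List ℕ} (hab : a <+: b) (hb : b ∈ α) : a ∈ α := by
  obtain ⟨t, rfl⟩ := hab
  induction t using List.reverseRecOn with
  | nil => simpa using hb
  | append_singleton s x ih => exact ih (hparent _ x (by simpa using hb))

theorem exists_mem_of_bcov (hparent : ∀ (a : List ℕ) (x : ℕ), a ++ [x] ∈ α → a ∈ α)
    (hchild : ∀ a ∈ α, ∃ x : ℕ, a ++ [x] ∈ α) {a : List ℕ} {U : Set (List ℕ)}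
    (h : BCov a U) (ha : a ∈ α) : ∃ b ∈ α, b ∈ U := by
  induction h with
  | eta hU => exact ⟨_, ha, hU⟩
  | zeta hb _ ih => exact ih (mem_of_prefix_of_mem hparent hb ha)
  | digamma _ ih =>
    obtain ⟨x, hx⟩ := hchild _ ha
    exact ih x hx

end PrefixClosed

theorem bpos_of_splits {α V : Set (List ℕ)}
    (hsplit : ∀ (a : List ℕ) (U : Set (List ℕ)), BCov a U → a ∈ α →
      ∃ b ∈ α, b ∈ U)
    {a : List ℕ} (ha : a ∈ α) (hV : α ⊆ V) : BPos a V :=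
  ⟨α, ha, hV, fun W ⟨b, hb, hcov⟩ => hsplit b W hcov hb⟩

namespace IsIdealPoint

variable {α : Set (List ℕ)}

theorem exists_prefix_mem (hα : IsIdealPoint α) {a b : List ℕ} (ha : a ∈ α) (hb : b ∈ α) :
    ∃ c ∈ α, a <+: c ∧ b <+: c := by
  obtain ⟨c, hc, hca, hcb⟩ := hα.2.1 a b ha hb
  exact ⟨c, hc, bcov_singleton_iff.mp hca, bcov_singleton_iff.mp hcb⟩

theorem mem_of_append_singleton_mem (hα : IsIdealPoint α) {a : List ℕ} {x : ℕ}
    (hax : a ++ [x] ∈ α) : a ∈ α := by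
  obtain ⟨b, hb, rfl⟩ := hα.2.2.1 _ {a} (bcov_singleton_iff.mpr (List.prefix_append _ _)) hax
  exact hb

theorem exists_append_singleton_mem (hα : IsIdealPoint α) {a : List ℕ} (ha : a ∈ α) :
    ∃ x : ℕ, a ++ [x] ∈ α := by
  obtain ⟨_, hb, x, rfl⟩ :=
    hα.2.2.1 a {c | ∃ x : ℕ, a ++ [x] = c} (.digamma fun x => .eta ⟨x, rfl⟩) ha
  exact ⟨x, hb⟩

end IsIdealPoint

/-- Elementary characterisation of ideal points of the formal Baire space. -/
theorem idealPoint_iff (α : Set (List ℕ)) :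
    IsIdealPoint α ↔
      (α.Nonempty ∧
       (∀ a b : List ℕ, a ∈ α → b ∈ α → ∃ c ∈ α, a <+: c ∧ b <+: c) ∧
       (∀ (a : List ℕ) (x : ℕ), a ++ [x] ∈ α → a ∈ α) ∧
       (∀ a : List ℕ, a ∈ α → ∃ x : ℕ, a ++ [x] ∈ α)) := by
  refine ⟨fun hα => ⟨hα.1, fun _ _ => hα.exists_prefix_mem,
    fun _ _ => hα.mem_of_append_singleton_mem, fun _ => hα.exists_append_singleton_mem⟩, ?_⟩
  rintro ⟨hne, hdir, hparent, hchild⟩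
  have hsplit := fun a U (h : BCov a U) => exists_mem_of_bcov hparent hchild h
  refine ⟨hne, fun a b ha hb => ?_, hsplit, fun _ _ ha hV => bpos_of_splits hsplit ha hV⟩
  obtain ⟨c, hc, hac, hbc⟩ := hdir a b ha hb
  exact ⟨c, hc, bcov_singleton_iff.mpr hac, bcov_singleton_iff.mpr hbc⟩
end

section
/- There is a bijective correspondence between ideal points of the formal Baire space and functions from ℕ to ℕ: each ideal point α corresponds to the unique function f with α = {initial segments of f}, and conversely the set of initial segments of any f : ℕ → ℕ is an ideal point. -/
def initSegs {β : Type*} (f : ℕ → β) : Set (List β) :=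
  {a | a = (List.range a.length).map f}

section InitSegs

variable {β : Type*} {f : ℕ → β} {a b : List β}

theorem mem_initSegs_iff : a ∈ initSegs f ↔ ∀ i (hi : i < a.length), a[i] = f i := by
  constructor
  · intro ha i hi
    simpa using List.getElem_of_eq ha hi
  · intro h
    exact List.ext_getElem (by simp) fun i hi _ => by simp [h i hi]

theorem map_range_mem_initSegs (f : ℕ → β) (n : ℕ) : (List.range n).map f ∈ initSegs f :=
  mem_initSegs_iff.2 fun i hi => by simp

theorem getD_mem_initSegs (d : β) (c : List β) : c ∈ initSegs (c.getD · d) :=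
  mem_initSegs_iff.2 fun _ hi => (List.getD_eq_getElem c d hi).symm

theorem mem_initSegs_of_prefix (ha : a ∈ initSegs f) (hba : b <+: a) : b ∈ initSegs f :=
  mem_initSegs_iff.2 fun i hi => (hba.getElem hi).trans (mem_initSegs_iff.1 ha i _)

theorem append_mem_initSegs (ha : a ∈ initSegs f) : a ++ [f a.length] ∈ initSegs f := by
  rw [mem_initSegs_iff] at ha ⊢
  intro i hi
  rcases (Nat.lt_succ_iff.1 (by simpa using hi)).lt_or_eq with hi' | rfl
  · rw [List.getElem_append_left hi']
    exact ha i hi'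
  · simp

theorem prefix_of_mem_initSegs (ha : a ∈ initSegs f) (hb : b ∈ initSegs f)
    (hlen : a.length ≤ b.length) : a <+: b :=
  List.prefix_iff_getElem.2 ⟨hlen, fun i hi =>
    (mem_initSegs_iff.1 ha i hi).trans (mem_initSegs_iff.1 hb i (hi.trans_le hlen)).symm⟩

theorem prefix_total_of_mem_initSegs (ha : a ∈ initSegs f) (hb : b ∈ initSegs f) :
    a <+: b ∨ b <+: a :=
  (le_total a.length b.length).imp (prefix_of_mem_initSegs ha hb) (prefix_of_mem_initSegs hb ha)

theorem eq_of_mem_initSegs_of_length_eq (ha : a ∈ initSegs f) (hb : b ∈ initSegs f)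
    (hlen : a.length = b.length) : a = b :=
  (prefix_of_mem_initSegs ha hb hlen.le).eq_of_length hlen

theorem initSegs_injective : Function.Injective (initSegs : (ℕ → β) → Set (List β)) := by
  intro f g hfg
  funext n
  have hg : (List.range (n + 1)).map f ∈ initSegs g := hfg ▸ map_range_mem_initSegs f (n + 1)
  simpa using mem_initSegs_iff.1 hg n (by simp)

theorem exists_eq_initSegs {α : Set (List β)} (hnil : [] ∈ α)
    (hext : ∀ a ∈ α, ∃ x, a ++ [x] ∈ α) (htotal : ∀ a ∈ α, ∀ b ∈ α, a <+: b ∨ b <+: a) :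
    ∃ f : ℕ → β, α = initSegs f := by
  have hlength : ∀ n, ∃ a ∈ α, a.length = n := by
    intro n
    induction n with
    | zero => exact ⟨[], hnil, rfl⟩
    | succ n ih =>
      obtain ⟨a, ha, rfl⟩ := ih
      obtain ⟨x, hx⟩ := hext a ha
      exact ⟨_, hx, by simp⟩
  choose w hwα hwlen using fun n => hlength (n + 1)
  set f : ℕ → β := fun n => (w n)[n]'(by simp [hwlen])
  have hsub : α ⊆ initSegs f := by
    intro a ha
    refine mem_initSegs_iff.2 fun i hi => ?_
    have hwa : w i <+: a := by
      rcases htotal _ (hwα i) a ha with h | h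
      · exact h
      · exact List.prefix_of_prefix_length_le (List.prefix_refl _) h (by rw [hwlen]; exact hi)
    exact (hwa.getElem _).symm
  refine ⟨f, Set.Subset.antisymm hsub fun a ha => ?_⟩
  obtain ⟨b, hb, hlen⟩ := hlength a.length
  exact eq_of_mem_initSegs_of_length_eq (hsub hb) ha hlen ▸ hb

end InitSegs

theorem BCov.exists_mem_initSegs {f : ℕ → ℕ} {a : List ℕ} {U : Set (List ℕ)} (h : BCov a U)
    (ha : a ∈ initSegs f) : ∃ b ∈ initSegs f, b ∈ U := by
  induction h with
  | eta haU => exact ⟨_, ha, haU⟩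
  | zeta hba _ ih => exact ih (mem_initSegs_of_prefix ha hba)
  | digamma _ ih => exact ih _ (append_mem_initSegs ha)

theorem isIdealPoint_initSegs (f : ℕ → ℕ) : IsIdealPoint (initSegs f) := by
  refine ⟨⟨[], map_range_mem_initSegs f 0⟩, fun a b ha hb => ?_,
    fun a U h ha => h.exists_mem_initSegs ha,
    fun a V ha hV => ⟨_, ha, hV, fun W ⟨b, hb, h⟩ => h.exists_mem_initSegs hb⟩⟩
  rcases prefix_total_of_mem_initSegs ha hb with h | h
  · exact ⟨b, hb, .zeta h (.eta rfl), .eta rfl⟩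
  · exact ⟨a, ha, .eta rfl, .zeta h (.eta rfl)⟩

namespace IsIdealPoint

variable {α : Set (List ℕ)} (hα : IsIdealPoint α)
include hα

theorem mem_of_prefix {a b : List ℕ} (ha : a ∈ α) (hba : b <+: a) : b ∈ α := by
  obtain ⟨c, hc, rfl⟩ := hα.2.2.1 a {b} (.zeta hba (.eta rfl)) ha
  exact hc

theorem nil_mem : [] ∈ α :=
  hα.mem_of_prefix hα.1.some_mem List.nil_prefix

theorem exists_append_mem {a : List ℕ} (ha : a ∈ α) : ∃ n, a ++ [n] ∈ α := by
  obtain ⟨b, hb, n, rfl⟩ :=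
    hα.2.2.1 a {b | ∃ n, b = a ++ [n]} (.digamma fun n => .eta ⟨n, rfl⟩) ha
  exact ⟨n, hb⟩

theorem prefix_total {a b : List ℕ} (ha : a ∈ α) (hb : b ∈ α) : a <+: b ∨ b <+: a := by
  obtain ⟨c, -, hca, hcb⟩ := hα.2.1 a b ha hb
  obtain ⟨a', ha', rfl⟩ := hca.exists_mem_initSegs (getD_mem_initSegs 0 c)
  obtain ⟨b', hb', rfl⟩ := hcb.exists_mem_initSegs (getD_mem_initSegs 0 c)
  exact prefix_total_of_mem_initSegs ha' hb'

theorem exists_eq_initSegs : ∃ f : ℕ → ℕ, α = initSegs f :=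
  _root_.exists_eq_initSegs hα.nil_mem (fun _ => hα.exists_append_mem)
    fun _ ha _ hb => hα.prefix_total ha hb

end IsIdealPoint

/-- Bijective correspondence between ideal points of the formal Baire space and
functions `ℕ → ℕ`: the set of initial segments of any `f` is an ideal point, and
every ideal point is the set of initial segments of a unique `f`. -/
theorem idealPoints_biject_with_functions :
    (∀ f : ℕ → ℕ, IsIdealPoint {a : List ℕ | a = (List.range a.length).map f}) ∧
    (∀ α : Set (List ℕ), IsIdealPoint α →
      ∃! f : ℕ → ℕ, α = {a : List ℕ | a = (List.range a.length).map f}) := by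
  refine ⟨isIdealPoint_initSegs, fun α hα => ?_⟩
  obtain ⟨f, rfl⟩ := hα.exists_eq_initSegs
  exact ⟨f, rfl, fun g hg => initSegs_injective hg.symm⟩
end

section
/- Let s ⊆ ℕ* × ℕ be monotone (meaning a ≤ b and b s n imply a s n, where ≤ is reverse prefix order). Then s is single-valued (a s n and a s m imply n = m) if and only if for all n, m ∈ ℕ, s⁻(n) ↓ s⁻(m) ◁_B s⁻({n} ↓ {m}), where ◁_B is the formal Baire cover, s⁻(n) = {a | a s n}, and for subsets of ℕ with the discrete cover, {n} ↓ {m} = {k | k = n ∧ k = m}. -/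
/-- `U ↓ V`: common refinements (in the reverse prefix order) of elements of `U` and `V`. -/
def Down (U V : Set (List ℕ)) : Set (List ℕ) :=
  {c : List ℕ | ∃ a ∈ U, ∃ b ∈ V, a <+: c ∧ b <+: c}

theorem BCov.nonempty {a : List ℕ} {U : Set (List ℕ)} (h : BCov a U) : U.Nonempty := by
  induction h with
  | eta ha => exact ⟨_, ha⟩
  | zeta _ _ ih => exact ih
  | digamma _ ih => exact ih 0

theorem self_mem_down {U V : Set (List ℕ)} {a : List ℕ} (hU : a ∈ U) (hV : a ∈ V) :
    a ∈ Down U V :=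
  ⟨a, hU, a, hV, List.prefix_refl a, List.prefix_refl a⟩

theorem mem_down_setOf {s : List ℕ → ℕ → Prop}
    (hmono : ∀ (a b : List ℕ) (n : ℕ), b <+: a → s b n → s a n) {n m : ℕ} {c : List ℕ}
    (hc : c ∈ Down {a | s a n} {a | s a m}) : s c n ∧ s c m := by
  obtain ⟨a, ha, b, hb, hac, hbc⟩ := hc
  exact ⟨hmono c a n hac ha, hmono c b m hbc hb⟩

/-- A monotone relation `s ⊆ ℕ* × ℕ` is single-valued iff
`s⁻(n) ↓ s⁻(m) ◁_B s⁻({n} ↓ {m})` for all `n, m`. -/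
theorem singleValued_iff_down (s : List ℕ → ℕ → Prop)
    (hmono : ∀ (a b : List ℕ) (n : ℕ), b <+: a → s b n → s a n) :
    (∀ (a : List ℕ) (n m : ℕ), s a n → s a m → n = m) ↔
    (∀ n m : ℕ, ∀ c ∈ Down {a : List ℕ | s a n} {a : List ℕ | s a m},
      BCov c {a : List ℕ | ∃ k : ℕ, (k = n ∧ k = m) ∧ s a k}) := by
  constructor
  · intro hsv n m c hc
    obtain ⟨hcn, hcm⟩ := mem_down_setOf hmono hc
    exact BCov.eta ⟨n, ⟨rfl, hsv c n m hcn hcm⟩, hcn⟩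
  · intro hcov a n m han ham
    obtain ⟨-, k, ⟨rfl, rfl⟩, -⟩ := (hcov n m a (self_mem_down han ham)).nonempty
    rfl
end

section
/- For every finite sequence a of naturals and every subset U ⊆ ℕ*: a ◁_B U if and only if nil ◁_B (U ∪ C_a), where C_a = {b ∈ ℕ* | length b = length a ∧ b ≠ a} and nil is the empty sequence. -/
-- `C_a` in the statement.
def levelCompl (a : List ℕ) : Set (List ℕ) := {b | b.length = a.length ∧ b ≠ a}

lemma List.IsPrefix.eq_of_prefix_of_length_eq {α : Type*} {a b d : List α} (hbd : b <+: d)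
    (had : a <+: d) (hlen : b.length = a.length) : b = a :=
  (List.prefix_of_prefix_length_le hbd had hlen.le).eq_of_length hlen

namespace BCov

lemma mono {a : List ℕ} {U V : Set (List ℕ)} (h : BCov a U) (hUV : U ⊆ V) : BCov a V := by
  induction h with
  | eta h => exact eta (hUV h)
  | zeta hp _ ih => exact zeta hp (ih hUV)
  | digamma _ ih => exact digamma fun n => ih n hUV

lemma trans {a : List ℕ} {V W : Set (List ℕ)} (h : BCov a V) (hVW : ∀ b ∈ V, BCov b W) :
    BCov a W := by
  induction h with
  | eta h => exact hVW _ h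
  | zeta hp _ ih => exact zeta hp (ih hVW)
  | digamma _ ih => exact digamma fun n => ih n hVW

lemma cov_length_add (c : List ℕ) (n : ℕ) : BCov c {b | b.length = c.length + n} := by
  induction n generalizing c with
  | zero => exact eta rfl
  | succ n ih =>
    refine digamma fun k => (ih (c ++ [k])).mono fun b hb => ?_
    simp only [Set.mem_ofPred_eq, List.length_append, List.length_singleton] at hb ⊢
    omega

lemma nil_cov_union_levelCompl {a : List ℕ} {U : Set (List ℕ)} (h : BCov a U) :
    BCov [] (U ∪ levelCompl a) := by
  refine (cov_length_add [] a.length).trans fun b hb => ?_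
  by_cases hba : b = a
  · exact hba ▸ h.mono Set.subset_union_left
  · exact eta (Or.inr ⟨by simpa using hb, hba⟩)

lemma cov_of_cov_union_levelCompl {a c d : List ℕ} {U : Set (List ℕ)}
    (h : BCov c (U ∪ levelCompl a)) (hcd : c <+: d) (had : a <+: d) : BCov d U := by
  generalize hV : U ∪ levelCompl a = V at h
  induction h generalizing d with
  | eta hc =>
    subst hV
    rcases hc with hcU | ⟨hlen, hne⟩
    · exact zeta hcd (eta hcU)
    · exact absurd (hcd.eq_of_prefix_of_length_eq had hlen) hne
  | zeta hbc _ ih => exact ih (hbc.trans hcd) had hV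
  | @digamma c _ _ ih =>
    obtain ⟨t, rfl⟩ := hcd
    cases t with
    | nil =>
      rw [List.append_nil] at had ⊢
      exact digamma fun n => ih n List.prefix_rfl (had.trans (List.prefix_append _ _)) hV
    | cons m t => exact ih m ⟨t, by simp⟩ had hV

end BCov

/-- `a ◁_B U` iff `nil ◁_B (U ∪ C_a)` where `C_a` is the set of sequences of the
same length as `a` distinct from `a`. -/
theorem cov_iff_nil_cov_union (a : List ℕ) (U : Set (List ℕ)) :
    BCov a U ↔
      BCov ([] : List ℕ) (U ∪ {b : List ℕ | b.length = a.length ∧ b ≠ a}) :=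
  ⟨BCov.nil_cov_union_levelCompl,
    fun h => BCov.cov_of_cov_union_levelCompl h List.nil_prefix List.prefix_rfl⟩
end

section
/- Decidable bar induction implies monotone bar induction restricted to Σ⁰₁ bars: if every decidable bar on ℕ* bars inductively (BI_D), then for every monotone Σ⁰₁ bar U ⊆ ℕ* and every inductive subset V with U ⊆ V, the empty sequence belongs to V. -/
/-!
Given `a ∈ U ↔ ∃ n, D a n`, accept a finite sequence `a` when some prefix of `a` has a
`D`-witness bounded by the length of `a`. Bounding both searches by `|a|` makes this set
decidable; monotonicity of `U` puts it inside `U`, and it is still a bar because along any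
`f`, once `U` is met by an initial segment with witness `m`, every longer initial segment of
length at least `m` is accepted. Decidable bar induction applied to it yields `[] ∈ V`.
-/

variable {α : Type*}

def boundedPrefixWitness (D : List α → ℕ → Bool) (a : List α) : Bool :=
  decide (∃ k ≤ a.length, ∃ m ≤ a.length, D (a.take k) m = true)

theorem exists_prefix_of_boundedPrefixWitness {D : List α → ℕ → Bool} {a : List α}
    (h : boundedPrefixWitness D a = true) : ∃ b m, b <+: a ∧ D b m = true := by
  obtain ⟨k, -, m, -, hD⟩ := of_decide_eq_true h
  exact ⟨a.take k, m, List.take_prefix k a, hD⟩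

theorem boundedPrefixWitness_map_range {D : List α → ℕ → Bool} {f : ℕ → α} {n m : ℕ}
    (h : D ((List.range n).map f) m = true) :
    boundedPrefixWitness D ((List.range (max n m)).map f) = true := by
  refine decide_eq_true ⟨n, by simp, m, by simp, ?_⟩
  rwa [← List.map_take, List.take_range, min_eq_left (le_max_left n m)]

theorem boundedPrefixWitness_subset {U : Set (List α)} {D : List α → ℕ → Bool}
    (hSigma : ∀ a, a ∈ U ↔ ∃ n, D a n = true)
    (hmono : ∀ a b : List α, b <+: a → b ∈ U → a ∈ U)
    {a : List α} (h : boundedPrefixWitness D a = true) : a ∈ U := by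
  obtain ⟨b, m, hba, hD⟩ := exists_prefix_of_boundedPrefixWitness h
  exact hmono a b hba ((hSigma b).2 ⟨m, hD⟩)

theorem boundedPrefixWitness_bar {U : Set (List α)} {D : List α → ℕ → Bool}
    (hSigma : ∀ a, a ∈ U ↔ ∃ n, D a n = true)
    (hbar : ∀ f : ℕ → α, ∃ n, (List.range n).map f ∈ U)
    (f : ℕ → α) : ∃ n, boundedPrefixWitness D ((List.range n).map f) = true := by
  obtain ⟨n, hn⟩ := hbar f
  obtain ⟨m, hm⟩ := (hSigma _).1 hn
  exact ⟨max n m, boundedPrefixWitness_map_range hm⟩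

theorem BID_implies_Sigma01_BIM_general
    -- Decidable bar induction (BI_D):
    (BID : ∀ u : List ℕ → Bool,
      (∀ f : ℕ → ℕ, ∃ n : ℕ, u ((List.range n).map f) = true) →
      ∀ V : Set (List ℕ),
        (∀ a : List ℕ, (∀ x : ℕ, a ++ [x] ∈ V) → a ∈ V) →
        (∀ a : List ℕ, u a = true → a ∈ V) → [] ∈ V)
    -- U is a monotone Σ⁰₁ bar:
    (U : Set (List ℕ)) (D : List ℕ → ℕ → Bool)
    (hSigma : ∀ a : List ℕ, a ∈ U ↔ ∃ n : ℕ, D a n = true)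
    (hmono : ∀ a b : List ℕ, b <+: a → b ∈ U → a ∈ U)
    (hbar : ∀ f : ℕ → ℕ, ∃ n : ℕ, (List.range n).map f ∈ U)
    -- V is inductive and contains U:
    (V : Set (List ℕ))
    (hind : ∀ a : List ℕ, (∀ x : ℕ, a ++ [x] ∈ V) → a ∈ V)
    (hUV : U ⊆ V) :
    [] ∈ V :=
  BID (boundedPrefixWitness D) (boundedPrefixWitness_bar hSigma hbar) V hind
    fun _ ha => hUV (boundedPrefixWitness_subset hSigma hmono ha)

/-- Decidable bar induction implies monotone bar induction for Σ⁰₁ bars. -/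
theorem BID_implies_Sigma01_BIM
    (pair : ℕ → ℕ → ℕ) (j0 j1 : ℕ → ℕ)
    (hsurj : ∀ k : ℕ, pair (j0 k) (j1 k) = k)
    (hj0 : ∀ n m : ℕ, j0 (pair n m) = n)
    (hj1 : ∀ n m : ℕ, j1 (pair n m) = m)
    (hle : ∀ n m : ℕ, n ≤ pair n m ∧ m ≤ pair n m)
    -- Decidable bar induction (BI_D):
    (BID : ∀ u : List ℕ → Bool,
      (∀ f : ℕ → ℕ, ∃ n : ℕ, u ((List.range n).map f) = true) →
      ∀ V : Set (List ℕ),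
        (∀ a : List ℕ, (∀ x : ℕ, a ++ [x] ∈ V) → a ∈ V) →
        (∀ a : List ℕ, u a = true → a ∈ V) → [] ∈ V)
    -- U is a monotone Σ⁰₁ bar:
    (U : Set (List ℕ)) (D : List ℕ → ℕ → Bool)
    (hSigma : ∀ a : List ℕ, a ∈ U ↔ ∃ n : ℕ, D a n = true)
    (hmono : ∀ a b : List ℕ, b <+: a → b ∈ U → a ∈ U)
    (hbar : ∀ f : ℕ → ℕ, ∃ n : ℕ, (List.range n).map f ∈ U)
    -- V is inductive and contains U:
    (V : Set (List ℕ))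
    (hind : ∀ a : List ℕ, (∀ x : ℕ, a ++ [x] ∈ V) → a ∈ V)
    (hUV : U ⊆ V) :
    [] ∈ V :=
  BID_implies_Sigma01_BIM_general BID U D hSigma hmono hbar V hind hUV
end

section
/- Every monotone Σ⁰₁ bar on ℕ* contains a decidable bar: if U ⊆ ℕ* is monotone and Σ⁰₁ (witnessed by decidable D with a ∈ U ↔ ∃ n, (a,n) ∈ D) and U is a bar, then V = {a | (ā j₀(|a|), j₁(|a|)) ∈ D} is a decidable bar contained in U, where ā k denotes the initial segment of a of length k. -/
theorem List.take_map_range {α : Type*} {n N : ℕ} (f : ℕ → α) (h : n ≤ N) :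
    ((List.range N).map f).take n = (List.range n).map f := by
  rw [← List.map_take, List.take_range, min_eq_left h]

theorem monotone_sigma01_bar_contains_decidable_bar_general
    (pair : ℕ → ℕ → ℕ) (j0 j1 : ℕ → ℕ)
    (hj0 : ∀ n m : ℕ, j0 (pair n m) = n)
    (hj1 : ∀ n m : ℕ, j1 (pair n m) = m)
    (hle : ∀ n m : ℕ, n ≤ pair n m ∧ m ≤ pair n m)
    (U : Set (List ℕ)) (D : List ℕ → ℕ → Bool)
    (hSigma : ∀ a : List ℕ, a ∈ U ↔ ∃ n : ℕ, D a n = true)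
    (hmono : ∀ a b : List ℕ, b <+: a → b ∈ U → a ∈ U)
    (hbar : ∀ f : ℕ → ℕ, ∃ n : ℕ, (List.range n).map f ∈ U) :
    (∀ a : List ℕ, D (a.take (j0 a.length)) (j1 a.length) = true → a ∈ U) ∧
    (∀ f : ℕ → ℕ, ∃ n : ℕ,
      D (((List.range n).map f).take (j0 n)) (j1 n) = true) := by
  refine ⟨fun a ha => hmono a _ (List.take_prefix _ _) ((hSigma _).2 ⟨_, ha⟩), fun f => ?_⟩
  obtain ⟨n, hn⟩ := hbar f
  obtain ⟨m, hm⟩ := (hSigma _).1 hn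
  -- the prefix of length ⟨n, m⟩ carries both the bar position n and its Σ⁰₁ witness m
  refine ⟨pair n m, ?_⟩
  rwa [hj0, hj1, List.take_map_range f (hle n m).1]

/-- Every monotone Σ⁰₁ bar contains a decidable bar, namely
`V = {a | (ā j₀(|a|), j₁(|a|)) ∈ D}`. -/
theorem monotone_sigma01_bar_contains_decidable_bar
    (pair : ℕ → ℕ → ℕ) (j0 j1 : ℕ → ℕ)
    (hsurj : ∀ k : ℕ, pair (j0 k) (j1 k) = k)
    (hj0 : ∀ n m : ℕ, j0 (pair n m) = n)
    (hj1 : ∀ n m : ℕ, j1 (pair n m) = m)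
    (hle : ∀ n m : ℕ, n ≤ pair n m ∧ m ≤ pair n m)
    (U : Set (List ℕ)) (D : List ℕ → ℕ → Bool)
    (hSigma : ∀ a : List ℕ, a ∈ U ↔ ∃ n : ℕ, D a n = true)
    (hmono : ∀ a b : List ℕ, b <+: a → b ∈ U → a ∈ U)
    (hbar : ∀ f : ℕ → ℕ, ∃ n : ℕ, (List.range n).map f ∈ U) :
    (∀ a : List ℕ, D (a.take (j0 a.length)) (j1 a.length) = true → a ∈ U) ∧
    (∀ f : ℕ → ℕ, ∃ n : ℕ,
      D (((List.range n).map f).take (j0 n)) (j1 n) = true) :=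
  monotone_sigma01_bar_contains_decidable_bar_general pair j0 j1 hj0 hj1 hle U D hSigma hmono hbar
end

section
/- Monotone bar induction is equivalent to spatiality of the formal Baire space at the root: (∀ monotone bar U, ∀ inductive V ⊇ U, nil ∈ V) if and only if (for all U ⊆ ℕ*, if every ideal point of the formal Baire space meets U then nil ◁_B U). -/
/-- Ideal points of the formal Baire space (elementary characterisation):
inhabited, filtering, prefix-closed, every element has a one-step extension. -/
def IdealPt (α : Set (List ℕ)) : Prop :=
  α.Nonempty ∧
  (∀ a b : List ℕ, a ∈ α → b ∈ α → ∃ c ∈ α, a <+: c ∧ b <+: c) ∧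
  (∀ (a : List ℕ) (x : ℕ), a ++ [x] ∈ α → a ∈ α) ∧
  (∀ a : List ℕ, a ∈ α → ∃ x : ℕ, a ++ [x] ∈ α)

/-!
For spatiality, apply monotone bar induction to the monotone closure of the bar `U` and to the
inductive set `{a | BCov a U}`. Conversely, induction on a derivation of `BCov a U` shows that
every extension of `a` lies in any inductive `V ⊇ U` when `U` is monotone; quantifying over
extensions is what lets the `ζ` rule go through, since `V` itself need not be monotone.
-/

theorem List.eq_or_concat_prefix_of_prefix {α : Type*} {a c : List α} (h : a <+: c) :
    c = a ∨ ∃ n, a ++ [n] <+: c := by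
  obtain ⟨t, rfl⟩ := h
  cases t with
  | nil => exact Or.inl (List.append_nil a)
  | cons n t => exact Or.inr ⟨n, t, by simp⟩

theorem BCov.of_prefix_mem_s10 {U : Set (List ℕ)} {a b : List ℕ} (hba : b <+: a) (hb : b ∈ U) :
    BCov a U :=
  BCov.zeta hba (BCov.eta hb)

theorem BCov.extension_mem {U V : Set (List ℕ)}
    (hU : ∀ a b : List ℕ, b <+: a → b ∈ U → a ∈ U)
    (hV : ∀ a : List ℕ, (∀ x : ℕ, a ++ [x] ∈ V) → a ∈ V) (hUV : U ⊆ V)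
    {a : List ℕ} (h : BCov a U) : ∀ c, a <+: c → c ∈ V := by
  induction h with
  | eta ha => exact fun c hac => hUV (hU c _ hac ha)
  | zeta hba _ ih => exact fun c hac => ih hU hUV c (hba.trans hac)
  | digamma _ ih =>
    intro c hac
    rcases List.eq_or_concat_prefix_of_prefix hac with rfl | ⟨n, hn⟩
    · exact hV c fun x => ih x hU hUV _ List.prefix_rfl
    · exact ih n hU hUV c hn

/-- Monotone bar induction is equivalent to spatiality of the formal Baire
space at the root. -/
theorem BIM_iff_spatiality_at_root :
    (∀ U V : Set (List ℕ),
      (∀ a b : List ℕ, b <+: a → b ∈ U → a ∈ U) →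
      (∀ α : Set (List ℕ), IdealPt α → ∃ a ∈ α, a ∈ U) →
      (∀ a : List ℕ, (∀ x : ℕ, a ++ [x] ∈ V) → a ∈ V) →
      U ⊆ V → [] ∈ V)
    ↔
    (∀ U : Set (List ℕ),
      (∀ α : Set (List ℕ), IdealPt α → ∃ a ∈ α, a ∈ U) →
      BCov ([] : List ℕ) U) := by
  constructor
  · intro bim U hbar
    refine bim {a | ∃ b, b <+: a ∧ b ∈ U} {a | BCov a U} ?_ ?_ (fun _ => BCov.digamma) ?_
    · exact fun a b hba ⟨d, hdb, hdU⟩ => ⟨d, hdb.trans hba, hdU⟩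
    · intro α hα
      obtain ⟨a, haα, haU⟩ := hbar α hα
      exact ⟨a, haα, a, List.prefix_rfl, haU⟩
    · exact fun a ⟨b, hba, hbU⟩ => BCov.of_prefix_mem_s10 hba hbU
  · intro spatial U V hU hbar hV hUV
    exact (spatial U hbar).extension_mem hU hV hUV [] List.prefix_rfl
end

section
/- Spatiality of the formal Baire space at the root implies full spatiality: if nil ◁_{Ip} U implies nil ◁_B U for all U ⊆ ℕ*, then a ◁_{Ip} U implies a ◁_B U for all a ∈ ℕ* and U ⊆ ℕ*, where a ◁_{Ip} U means every ideal point containing a meets U. -/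
lemma not_comparable_of_mem_levelCompl {a b : List ℕ} (hb : b ∈ levelCompl a) :
    ¬ (b <+: a ∨ a <+: b) := by
  rintro (hba | hab)
  · exact hb.2 (hba.eq_of_length hb.1)
  · exact hb.2 (hab.eq_of_length hb.1.symm).symm

/-- Pruning a derivation of `c ◁_B V` to the nodes comparable with `a`. -/
lemma BCov.of_comparable_mem {U V : Set (List ℕ)} {a c : List ℕ} (hc : BCov c V)
    (hV : ∀ v ∈ V, (v <+: a ∨ a <+: v) → v ∈ U) :
    (c <+: a → BCov a U) ∧ (a <+: c → BCov c U) := by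
  induction hc with
  | eta hcV =>
    exact ⟨fun hca => .zeta hca (.eta (hV _ hcV (.inl hca))),
      fun hac => .eta (hV _ hcV (.inr hac))⟩
  | @zeta c b _ hbc _ ih =>
    refine ⟨fun hca => (ih hV).1 (hbc.trans hca), fun hac => ?_⟩
    rcases List.prefix_or_prefix_of_prefix hbc hac with hba | hab
    · exact .zeta hac ((ih hV).1 hba)
    · exact .zeta hbc ((ih hV).2 hab)
  | @digamma c _ _ ih =>
    refine ⟨fun hca => ?_, fun hac => .digamma fun n => (ih n hV).2 (hac.trans (c.prefix_append _))⟩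
    obtain ⟨t, rfl⟩ := hca
    cases t with
    | nil =>
      rw [List.append_nil]
      exact .digamma fun n => (ih n hV).2 (by simp)
    | cons x t => exact (ih x hV).1 ⟨t, by simp⟩

lemma BCov.of_union_levelCompl {U : Set (List ℕ)} {a : List ℕ}
    (h : BCov [] (U ∪ levelCompl a)) : BCov a U := by
  refine (h.of_comparable_mem ?_).1 a.nil_prefix
  rintro v (hvU | hvC) hcomp
  · exact hvU
  · exact absurd hcomp (not_comparable_of_mem_levelCompl hvC)

namespace IdealPt

variable {α : Set (List ℕ)}

lemma nil_mem (hα : IdealPt α) : [] ∈ α := by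
  obtain ⟨⟨e, he⟩, _, hdown, _⟩ := hα
  induction e using List.reverseRecOn with
  | nil => exact he
  | append_singleton d x ih => exact ih (hdown d x he)

lemma exists_mem_length_eq (hα : IdealPt α) (n : ℕ) : ∃ d ∈ α, d.length = n := by
  induction n with
  | zero => exact ⟨[], hα.nil_mem, rfl⟩
  | succ m ih =>
    obtain ⟨d, hd, rfl⟩ := ih
    obtain ⟨x, hx⟩ := hα.2.2.2 d hd
    exact ⟨d ++ [x], hx, by simp⟩

lemma exists_mem_union_levelCompl (hα : IdealPt α) {a : List ℕ} {U : Set (List ℕ)}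
    (ha : a ∈ α → ∃ b ∈ α, b ∈ U) : ∃ b ∈ α, b ∈ U ∪ levelCompl a := by
  obtain ⟨d, hd, hlen⟩ := hα.exists_mem_length_eq a.length
  by_cases hda : d = a
  · obtain ⟨b, hb, hbU⟩ := ha (hda ▸ hd)
    exact ⟨b, hb, .inl hbU⟩
  · exact ⟨d, hd, .inr ⟨hlen, hda⟩⟩

end IdealPt

/-- Spatiality at the root implies full spatiality of the formal Baire space. -/
theorem spatiality_at_root_implies_spatiality
    (h : ∀ U : Set (List ℕ),
      (∀ α : Set (List ℕ), IdealPt α → ([] : List ℕ) ∈ α → ∃ b ∈ α, b ∈ U) →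
      BCov ([] : List ℕ) U) :
    ∀ (a : List ℕ) (U : Set (List ℕ)),
      (∀ α : Set (List ℕ), IdealPt α → a ∈ α → ∃ b ∈ α, b ∈ U) →
      BCov a U := by
  intro a U hIp
  exact BCov.of_union_levelCompl <| h _ fun α hα _ => hα.exists_mem_union_levelCompl (hIp α hα)
end

section
/- Let U ⊆ ℕ* be a spread. A subset α ⊆ ℕ* is an ideal point of the relativised topology B_U (with cover a ◁_U V iff a ◁_B (¬U ∪ V) and the greatest compatible positivity) if and only if α is an ideal point of the formal Baire space with α ⊆ U. -/
/-- The relativised cover of a spread: `a ◁_U V ≡ a ◁_B (¬U ∪ V)`. -/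
def UCov (U : Set (List ℕ)) (a : List ℕ) (V : Set (List ℕ)) : Prop :=
  BCov a (Uᶜ ∪ V)

/-- The greatest positivity compatible with `◁_U`: `a ⋉_U V ≡ a ⋉_B (U ∩ V)`. -/
def UPos (U : Set (List ℕ)) (a : List ℕ) (V : Set (List ℕ)) : Prop :=
  BPos a (U ∩ V)

/-- Ideal points of the relativised topology `B_U`. -/
def IsIdealPointU (U : Set (List ℕ)) (α : Set (List ℕ)) : Prop :=
  α.Nonempty ∧
  (∀ a b : List ℕ, a ∈ α → b ∈ α →
    ∃ c ∈ α, UCov U c ({a} : Set (List ℕ)) ∧ UCov U c ({b} : Set (List ℕ))) ∧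
  (∀ (a : List ℕ) (V : Set (List ℕ)), UCov U a V → a ∈ α → ∃ b ∈ α, b ∈ V) ∧
  (∀ (a : List ℕ) (V : Set (List ℕ)), a ∈ α → α ⊆ V → UPos U a V)

open Set

/-!
A point of `B_U` must lie in `U`, since a node outside `U` is `U`-covered by `∅`. The only
non-trivial point is filtering. If `c ∈ U` and `c ◁_U {x}`, follow an infinite branch of the
spread through `c`: the set of its finite initial segments splits Baire covers, so it meets
`¬U ∪ {x}`, and as it lies in `U` it contains `x`. Hence two nodes `U`-covering `c` both lie on
one branch, are comparable, and the longer of them witnesses filtering in the Baire space.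
-/

theorem List.exists_concat_prefix_of_prefix_of_ne {α : Type*} {d l : List α} (h : d <+: l)
    (hne : d ≠ l) : ∃ x, d ++ [x] <+: l := by
  obtain ⟨t, rfl⟩ := h
  cases t with
  | nil => exact absurd (List.append_nil d).symm hne
  | cons x t => exact ⟨x, t, by simp⟩

theorem BCov.mono_s13 {a : List ℕ} {V W : Set (List ℕ)} (h : BCov a V) (hVW : V ⊆ W) :
    BCov a W := by
  induction h with
  | eta h => exact .eta (hVW h)
  | zeta hp _ ih => exact .zeta hp (ih hVW)
  | digamma _ ih => exact .digamma fun n => ih n hVW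

theorem BCov.singleton_of_prefix {a b : List ℕ} (h : b <+: a) : BCov a {b} :=
  .zeta h (.eta rfl)

/-- A spread, without the requirements of being inhabited and decidable. -/
structure IsPrunedTree (T : Set (List ℕ)) : Prop where
  prefix_mem : ∀ a b : List ℕ, a ∈ T → b <+: a → b ∈ T
  exists_concat_mem : ∀ a ∈ T, ∃ n : ℕ, a ++ [n] ∈ T

theorem BCov.exists_mem_of_isPrunedTree {T W : Set (List ℕ)} (hT : IsPrunedTree T)
    {c : List ℕ} (h : BCov c W) (hc : c ∈ T) : ∃ d ∈ T, d ∈ W := by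
  induction h with
  | eta h => exact ⟨_, hc, h⟩
  | zeta hp _ ih => exact ih (hT.prefix_mem _ _ hc hp)
  | digamma _ ih =>
    obtain ⟨n, hn⟩ := hT.exists_concat_mem _ hc
    exact ih n hn

section Branch

variable {g : ℕ → List ℕ} (hg : ∀ k, ∃ n, g (k + 1) = g k ++ [n])
include hg

theorem prefix_of_le_of_forall_eq_concat {k j : ℕ} (h : k ≤ j) : g k <+: g j := by
  induction j, h using Nat.le_induction with
  | base => exact List.prefix_refl _
  | succ j _ ih =>
    obtain ⟨n, hn⟩ := hg j
    exact ih.trans (hn ▸ List.prefix_append _ _)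

theorem isPrunedTree_prefixes_of_forall_eq_concat : IsPrunedTree {l | ∃ k, l <+: g k} where
  prefix_mem := fun _ _ ⟨k, hk⟩ h => ⟨k, h.trans hk⟩
  exists_concat_mem := by
    rintro d ⟨k, hk⟩
    rcases eq_or_ne d (g k) with rfl | hne
    · obtain ⟨n, hn⟩ := hg k
      exact ⟨n, k + 1, hn ▸ List.prefix_refl _⟩
    · obtain ⟨n, hn⟩ := List.exists_concat_prefix_of_prefix_of_ne hk hne
      exact ⟨n, k, hn⟩

theorem prefix_total_of_mem_prefixes_of_forall_eq_concat {d e : List ℕ}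
    (hd : d ∈ {l | ∃ k, l <+: g k}) (he : e ∈ {l | ∃ k, l <+: g k}) : d <+: e ∨ e <+: d := by
  obtain ⟨k, hk⟩ := hd
  obtain ⟨j, hj⟩ := he
  exact List.prefix_or_prefix_of_prefix
    (hk.trans (prefix_of_le_of_forall_eq_concat hg (le_max_left k j)))
    (hj.trans (prefix_of_le_of_forall_eq_concat hg (le_max_right k j)))

end Branch

theorem IsPrunedTree.exists_branch {T : Set (List ℕ)} (hT : IsPrunedTree T) {a : List ℕ}
    (ha : a ∈ T) : ∃ β ⊆ T, a ∈ β ∧ IsPrunedTree β ∧ ∀ d ∈ β, ∀ e ∈ β, d <+: e ∨ e <+: d := by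
  have hstep : ∀ l, ∃ n : ℕ, l ∈ T → l ++ [n] ∈ T := fun l => by
    by_cases hl : l ∈ T
    · obtain ⟨n, hn⟩ := hT.exists_concat_mem l hl
      exact ⟨n, fun _ => hn⟩
    · exact ⟨0, fun h => absurd h hl⟩
  choose s hs using hstep
  set g : ℕ → List ℕ := fun k => (fun l => l ++ [s l])^[k] a
  have hg : ∀ k, ∃ n, g (k + 1) = g k ++ [n] := fun k =>
    ⟨s (g k), Function.iterate_succ_apply' _ k a⟩
  have hgT : ∀ k, g k ∈ T := fun k => by
    induction k with
    | zero => exact ha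
    | succ k ih =>
      simp only [g, Function.iterate_succ_apply']
      exact hs _ ih
  exact ⟨{l | ∃ k, l <+: g k}, fun l ⟨k, hk⟩ => hT.prefix_mem _ _ (hgT k) hk,
    ⟨0, List.prefix_refl a⟩, isPrunedTree_prefixes_of_forall_eq_concat hg,
    fun _ hd _ he => prefix_total_of_mem_prefixes_of_forall_eq_concat hg hd he⟩

theorem mem_of_uCov_singleton {U β : Set (List ℕ)} (hβU : β ⊆ U) (hβ : IsPrunedTree β)
    {c x : List ℕ} (hc : c ∈ β) (h : UCov U c {x}) : x ∈ β := by
  obtain ⟨d, hdβ, hd | rfl⟩ := BCov.exists_mem_of_isPrunedTree hβ h hc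
  · exact absurd (hβU hdβ) hd
  · exact hdβ

theorem prefix_total_of_uCov {U : Set (List ℕ)} (hU : IsPrunedTree U) {a b c : List ℕ}
    (hc : c ∈ U) (ha : UCov U c {a}) (hb : UCov U c {b}) : a <+: b ∨ b <+: a := by
  obtain ⟨β, hβU, hcβ, hβ, htotal⟩ := hU.exists_branch hc
  exact htotal _ (mem_of_uCov_singleton hβU hβ hcβ ha) _ (mem_of_uCov_singleton hβU hβ hcβ hb)

theorem IsIdealPointU.subset {U α : Set (List ℕ)} (h : IsIdealPointU U α) : α ⊆ U := by
  intro a haα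
  by_contra haU
  obtain ⟨_, _, hb⟩ := h.2.2.1 a ∅ (BCov.eta (Or.inl haU)) haα
  exact hb

theorem IsIdealPointU.isIdealPoint {U α : Set (List ℕ)} (hU : IsPrunedTree U)
    (h : IsIdealPointU U α) : IsIdealPoint α := by
  have hαU := h.subset
  obtain ⟨hne, hfilter, hsplit, hpos⟩ := h
  refine ⟨hne, fun a b haα hbα => ?_, fun a W hW => hsplit a W (hW.mono_s13 subset_union_right),
    fun a V haα hαV => ?_⟩
  · obtain ⟨c, hcα, hca, hcb⟩ := hfilter a b haα hbα
    rcases prefix_total_of_uCov hU (hαU hcα) hca hcb with hab | hba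
    · exact ⟨b, hbα, .singleton_of_prefix hab, .eta rfl⟩
    · exact ⟨a, haα, .eta rfl, .singleton_of_prefix hba⟩
  · obtain ⟨W, haW, hWUV, hW⟩ := hpos a V haα hαV
    exact ⟨W, haW, hWUV.trans inter_subset_right, hW⟩

theorem IsIdealPoint.isIdealPointU {U α : Set (List ℕ)} (h : IsIdealPoint α) (hαU : α ⊆ U) :
    IsIdealPointU U α := by
  obtain ⟨hne, hfilter, hsplit, hpos⟩ := h
  refine ⟨hne, fun a b haα hbα => ?_, fun a V hV haα => ?_,
    fun a V haα hαV => hpos a (U ∩ V) haα fun x hx => ⟨hαU hx, hαV hx⟩⟩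
  · obtain ⟨c, hcα, hca, hcb⟩ := hfilter a b haα hbα
    exact ⟨c, hcα, hca.mono_s13 subset_union_right, hcb.mono_s13 subset_union_right⟩
  · obtain ⟨b, hbα, hbU | hbV⟩ := hsplit a _ hV haα
    · exact absurd (hαU hbα) hbU
    · exact ⟨b, hbα, hbV⟩

theorem idealPointU_iff_general (U : Set (List ℕ))
    (hpre : ∀ a b : List ℕ, a ∈ U → b <+: a → b ∈ U)
    (hext : ∀ a ∈ U, ∃ n : ℕ, a ++ [n] ∈ U)
    (α : Set (List ℕ)) :
    IsIdealPointU U α ↔ (IsIdealPoint α ∧ α ⊆ U) :=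
  ⟨fun h => ⟨h.isIdealPoint ⟨hpre, hext⟩, h.subset⟩, fun ⟨h, hαU⟩ => h.isIdealPointU hαU⟩

/-- For a spread `U`, ideal points of `B_U` are exactly the ideal points of the
formal Baire space belonging to `U`. -/
theorem idealPointU_iff (U : Set (List ℕ))
    (hdec : ∀ a : List ℕ, a ∈ U ∨ a ∉ U)
    (hne : U.Nonempty)
    (hpre : ∀ a b : List ℕ, a ∈ U → b <+: a → b ∈ U)
    (hext : ∀ a ∈ U, ∃ n : ℕ, a ++ [n] ∈ U)
    (α : Set (List ℕ)) :
    IsIdealPointU U α ↔ (IsIdealPoint α ∧ α ⊆ U) :=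
  idealPointU_iff_general U hpre hext α
end

section
/- Every spread is a retract of the formal Baire space: for each spread U there is a formal map s : B → B_U inductively defined by (nil s nil); (a s b and b*n ∈ U imply a*n s b*n); (a s b and b*n ∉ U imply a*n s b*l where l is the least number with b*l ∈ U), such that the composite of the inclusion id : B_U → B followed by s : B → B_U is the identity formal map, i.e. for all a, b ∈ ℕ*: a ◁_U s⁻(b) ↔ a ◁_U {b}. -/
/-- The retraction of the formal Baire space onto a spread `U`, defined
inductively: `nil s nil`; if `a s b` and `b*n ∈ U` then `a*n s b*n`; if
`a s b` and `b*n ∉ U` then `a*n s b*l` where `l` is least with `b*l ∈ U`. -/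
inductive Ret (U : Set (List ℕ)) : List ℕ → List ℕ → Prop
  | nil : Ret U [] []
  | mem {a b : List ℕ} {n : ℕ} :
      Ret U a b → b ++ [n] ∈ U → Ret U (a ++ [n]) (b ++ [n])
  | notMem {a b : List ℕ} {n l : ℕ} :
      Ret U a b → b ++ [n] ∉ U → b ++ [l] ∈ U → (∀ k < l, b ++ [k] ∉ U) →
      Ret U (a ++ [n]) (b ++ [l])

/-!
On the spread itself the retraction is the identity relation: if `a ∈ U`, prefix-closure puts
every prefix of `a` in `U`, so a derivation of `a s b` can only use the `mem` rule, forcing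
`b = a`; conversely `a s a` is derived by `mem` along the prefixes of `a`. Hence
`¬U ∪ s⁻(b) = ¬U ∪ {b}`, and the two covers are literally the same.
-/

namespace Ret

variable {U : Set (List ℕ)}

theorem refl_of_mem (hpre : ∀ a b : List ℕ, a ∈ U → b <+: a → b ∈ U) {a : List ℕ}
    (ha : a ∈ U) : Ret U a a := by
  induction a using List.reverseRecOn with
  | nil => exact nil
  | append_singleton c n ih => exact mem (ih (hpre _ _ ha (List.prefix_append _ _))) ha

theorem eq_of_mem (hpre : ∀ a b : List ℕ, a ∈ U → b <+: a → b ∈ U) {a b : List ℕ}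
    (h : Ret U a b) (ha : a ∈ U) : a = b := by
  induction h with
  | nil => rfl
  | mem _ _ ih => rw [ih (hpre _ _ ha (List.prefix_append _ _))]
  | notMem _ hn _ _ ih =>
    obtain rfl := ih (hpre _ _ ha (List.prefix_append _ _))
    exact absurd ha hn

theorem compl_union_setOf_eq (hpre : ∀ a b : List ℕ, a ∈ U → b <+: a → b ∈ U)
    (b : List ℕ) : Uᶜ ∪ {c : List ℕ | Ret U c b} = Uᶜ ∪ {b} := by
  ext c
  by_cases hc : c ∈ U
  · simp only [Set.mem_union, Set.mem_compl_iff, hc, not_true_eq_false, false_or,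
      Set.mem_ofPred_eq, Set.mem_singleton_iff]
    exact ⟨fun h => eq_of_mem hpre h hc, fun h => h ▸ refl_of_mem hpre hc⟩
  · simp [hc]

end Ret

theorem spread_retract_general (U : Set (List ℕ))
    (hpre : ∀ a b : List ℕ, a ∈ U → b <+: a → b ∈ U) :
    ∀ a b : List ℕ,
      BCov a (Uᶜ ∪ {c : List ℕ | Ret U c b}) ↔
      BCov a (Uᶜ ∪ ({b} : Set (List ℕ))) := by
  intro a b
  rw [Ret.compl_union_setOf_eq hpre b]

/-- Every spread is a retract of the formal Baire space: the composite of the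
inclusion `B_U → B` with the retraction `s : B → B_U` is the identity formal
map, i.e. `a ◁_U s⁻(b) ↔ a ◁_U {b}`. -/
theorem spread_retract (U : Set (List ℕ))
    (hdec : ∀ a : List ℕ, a ∈ U ∨ a ∉ U)
    (hne : U.Nonempty)
    (hpre : ∀ a b : List ℕ, a ∈ U → b <+: a → b ∈ U)
    (hext : ∀ a ∈ U, ∃ n : ℕ, a ++ [n] ∈ U) :
    ∀ a b : List ℕ,
      BCov a (Uᶜ ∪ {c : List ℕ | Ret U c b}) ↔
      BCov a (Uᶜ ∪ ({b} : Set (List ℕ))) :=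
  spread_retract_general U hpre
end

section
/- For the formal topology of real numbers with base S = {(p,q) ∈ ℚ × ℚ | p < q} and inductively generated cover ◁_R, and for any (p,q) ∈ S and any finite subset U ⊆ S: (p,q) ◁_{Ip} U if and only if (p,q) ◁_R U, where (p,q) ◁_{Ip} U means every ideal point of R containing (p,q) meets U. -/
/-!
Soundness is an induction on `RCov`; the only rule needing thought is `wi`, which is sound because
the rationals are dense in `ℝ`. For completeness it suffices, by `wi`, to cover every closed
subinterval `[p, q]` of the open one, and this is the Heine–Borel argument by induction on `U`:
the interval `(a, b) ∈ U` containing `p` covers `(p, β)` for any `β < b`, while `[m, q]` for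
some `m < b` is covered by `U \ {(a, b)}`, and the two pieces are glued by `split`.
-/

/-- The inductively generated cover of the formal topology of real numbers, on
the base `S = {(p,q) ∈ ℚ × ℚ | p < q}`. -/
inductive RCov : ℚ × ℚ → Set (ℚ × ℚ) → Prop
  | refl {a : ℚ × ℚ} {U : Set (ℚ × ℚ)} : a ∈ U → RCov a U
  | le {p q p' q' : ℚ} {U : Set (ℚ × ℚ)} :
      p' ≤ p → q ≤ q' → RCov (p', q') U → RCov (p, q) U
  | wi {p q : ℚ} {U : Set (ℚ × ℚ)} :
      (∀ p' q' : ℚ, p < p' → p' < q' → q' < q → RCov (p', q') U) → RCov (p, q) U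
  | split {p q p' q' : ℚ} {U : Set (ℚ × ℚ)} :
      p < p' → p' < q' → q' < q → RCov (p, q') U → RCov (p', q) U → RCov (p, q) U

def InUnionIoo (U : Set (ℚ × ℚ)) (x : ℝ) : Prop :=
  ∃ r ∈ U, (r.1 : ℝ) < x ∧ x < r.2

namespace RCov

lemma mono {a : ℚ × ℚ} {U V : Set (ℚ × ℚ)} (h : RCov a U) (hUV : U ⊆ V) : RCov a V := by
  induction h with
  | refl h => exact refl (hUV h)
  | le h₁ h₂ _ ih => exact le h₁ h₂ (ih hUV)
  | wi _ ih => exact wi fun p' q' h₁ h₂ h₃ => ih p' q' h₁ h₂ h₃ hUV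
  | split h₁ h₂ h₃ _ _ ih₁ ih₂ => exact split h₁ h₂ h₃ (ih₁ hUV) (ih₂ hUV)

lemma of_mem_of_le {p q : ℚ} {a : ℚ × ℚ} {U : Set (ℚ × ℚ)} (ha : a ∈ U) (hp : a.1 ≤ p)
    (hq : q ≤ a.2) : RCov (p, q) U :=
  le hp hq (refl ha)

lemma inUnionIoo {a : ℚ × ℚ} {U : Set (ℚ × ℚ)} (h : RCov a U) :
    ∀ x : ℝ, (a.1 : ℝ) < x → x < a.2 → InUnionIoo U x := by
  induction h with
  | refl h => exact fun x hx₁ hx₂ => ⟨_, h, hx₁, hx₂⟩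
  | le h₁ h₂ _ ih =>
      intro x hx₁ hx₂
      exact ih x ((Rat.cast_le.mpr h₁).trans_lt hx₁) (hx₂.trans_le (Rat.cast_le.mpr h₂))
  | wi _ ih =>
      intro x hx₁ hx₂
      obtain ⟨p', hpp', hp'x⟩ := exists_rat_btwn hx₁
      obtain ⟨q', hxq', hq'q⟩ := exists_rat_btwn hx₂
      exact ih p' q' (mod_cast hpp') (mod_cast hp'x.trans hxq') (mod_cast hq'q) x hp'x hxq'
  | @split p q p' q' U _ h₂ _ _ _ ih₁ ih₂ =>
      intro x hx₁ hx₂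
      rcases lt_or_ge x (q' : ℝ) with h | h
      · exact ih₁ x hx₁ h
      · exact ih₂ x ((Rat.cast_lt.mpr h₂).trans_le h) hx₂

end RCov

/-- An interval ending at `b` is not needed to cover `b` or any point right of it, and the
interval of `U` covering `b` also covers some `[m, b]` with `p < m`. -/
lemma exists_closed_cover_diff {U : Set (ℚ × ℚ)} {p q a b : ℚ} (hpb : p < b)
    (hbq : b < q) (hcov : ∀ x : ℝ, (p : ℝ) ≤ x → x ≤ q → InUnionIoo U x) :
    ∃ m : ℚ, p < m ∧ m < b ∧
      ∀ x : ℝ, (m : ℝ) ≤ x → x ≤ q → InUnionIoo (U \ {(a, b)}) x := by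
  obtain ⟨⟨c, d⟩, hcd, hcb, hbd⟩ := hcov b (mod_cast hpb.le) (mod_cast hbq.le)
  have hcb : c < b := mod_cast hcb
  have hbd : b < d := mod_cast hbd
  have hcd_ne : ((c, d) : ℚ × ℚ) ≠ (a, b) := fun h => hbd.ne (Prod.ext_iff.mp h).2.symm
  obtain ⟨m, hm, hmb⟩ := exists_between (max_lt hcb hpb)
  refine ⟨m, (le_max_right _ _).trans_lt hm, hmb, fun x hmx hxq => ?_⟩
  rcases lt_or_ge x (b : ℝ) with hxb | hbx
  · refine ⟨(c, d), ⟨hcd, hcd_ne⟩, ?_, hxb.trans (mod_cast hbd)⟩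
    exact (Rat.cast_lt.mpr ((le_max_left _ _).trans_lt hm)).trans_le hmx
  · have hpx : (p : ℝ) ≤ x := (Rat.cast_le.mpr ((le_max_right _ _).trans_lt hm).le).trans hmx
    obtain ⟨r, hr, hrx, hxr⟩ := hcov x hpx hxq
    refine ⟨r, ⟨hr, fun hr_eq => ?_⟩, hrx, hxr⟩
    rw [Set.mem_singleton_iff.mp hr_eq] at hxr
    exact hbx.not_gt hxr

lemma RCov.of_closed_cover {U : Set (ℚ × ℚ)} (hfin : U.Finite) {p q : ℚ} (hpq : p ≤ q)
    (hcov : ∀ x : ℝ, (p : ℝ) ≤ x → x ≤ q → InUnionIoo U x) : RCov (p, q) U := by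
  induction hn : U.ncard using Nat.strong_induction_on generalizing U p with
  | _ n ih =>
  obtain ⟨⟨a, b⟩, hab, hap, hpb⟩ := hcov p le_rfl (mod_cast hpq)
  have hap : a < p := mod_cast hap
  have hpb : p < b := mod_cast hpb
  rcases le_or_gt q b with hqb | hbq
  · exact of_mem_of_le hab hap.le hqb
  obtain ⟨m, hpm, hmb, hcov'⟩ := exists_closed_cover_diff hpb hbq hcov
  obtain ⟨β, hmβ, hβb⟩ := exists_between hmb
  have hcard : (U \ {(a, b)}).ncard < n := hn ▸ Set.ncard_sdiff_singleton_lt_of_mem hab hfin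
  have hmq : RCov (m, q) U :=
    (ih _ hcard hfin.sdiff (hmb.trans hbq).le hcov' rfl).mono Set.sdiff_subset
  exact split hpm hmβ (hβb.trans hbq) (of_mem_of_le hab hap.le hβb.le) hmq

theorem finite_cov_coincide_general (p q : ℚ)
    (U : Set (ℚ × ℚ)) (hfin : U.Finite) :
    (∀ x : ℝ, (p : ℝ) < x → x < (q : ℝ) →
      ∃ r ∈ U, (r.1 : ℝ) < x ∧ x < (r.2 : ℝ)) ↔ RCov (p, q) U := by
  refine ⟨fun hcov => RCov.wi fun p' q' hpp' hp'q' hq'q => ?_, RCov.inUnionIoo⟩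
  refine RCov.of_closed_cover hfin hp'q'.le fun x hp'x hxq' => hcov x ?_ ?_
  · exact (Rat.cast_lt.mpr hpp').trans_le hp'x
  · exact hxq'.trans_lt (Rat.cast_lt.mpr hq'q)

/-- Finite covers in the pointwise and pointfree topologies of the formal reals
coincide. -/
theorem finite_cov_coincide (p q : ℚ) (hpq : p < q)
    (U : Set (ℚ × ℚ)) (hU : ∀ r ∈ U, r.1 < r.2) (hfin : U.Finite) :
    (∀ x : ℝ, (p : ℝ) < x → x < (q : ℝ) →
      ∃ r ∈ U, (r.1 : ℝ) < x ∧ x < (r.2 : ℝ)) ↔ RCov (p, q) U :=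
  finite_cov_coincide_general p q U hfin
end

section
/- Heine–Borel for the formal reals implies spatiality: if every open cover of [0,1] by rational open intervals has a finite subcover, and finite covers in the pointwise and pointfree topologies on the formal reals coincide, then for all (p,q) and U, (p,q) ◁_{R,Ip} U implies (p,q) ◁_R U. -/
theorem RCov.mono_s18 {a : ℚ × ℚ} {U V : Set (ℚ × ℚ)} (h : RCov a U) (hUV : U ⊆ V) :
    RCov a V := by
  induction h with
  | refl h => exact RCov.refl (hUV h)
  | le h₁ h₂ _ ih => exact RCov.le h₁ h₂ (ih hUV)
  | wi _ ih => exact RCov.wi fun p' q' h₁ h₂ h₃ => ih p' q' h₁ h₂ h₃ hUV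
  | split h₁ h₂ h₃ _ _ ih₁ ih₂ => exact RCov.split h₁ h₂ h₃ (ih₁ hUV) (ih₂ hUV)

/-- Heine–Borel for the formal reals, together with the coincidence of finite
pointwise and pointfree covers, implies spatiality of the formal reals. -/
theorem heineBorel_implies_spatiality
    -- Heine–Borel: every open cover of a compact rational interval by rational
    -- open intervals has a finite subcover.
    (HB : ∀ (p' q' : ℚ) (W : Set (ℚ × ℚ)),
      (∀ x : ℝ, (p' : ℝ) ≤ x → x ≤ (q' : ℝ) →
        ∃ r ∈ W, (r.1 : ℝ) < x ∧ x < (r.2 : ℝ)) →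
      ∃ V ⊆ W, V.Finite ∧ ∀ x : ℝ, (p' : ℝ) ≤ x → x ≤ (q' : ℝ) →
        ∃ r ∈ V, (r.1 : ℝ) < x ∧ x < (r.2 : ℝ))
    -- Finite pointwise and pointfree covers coincide.
    (hfin : ∀ (p' q' : ℚ) (V : Set (ℚ × ℚ)), V.Finite → p' < q' →
      ((∀ x : ℝ, (p' : ℝ) < x → x < (q' : ℝ) →
        ∃ r ∈ V, (r.1 : ℝ) < x ∧ x < (r.2 : ℝ)) ↔ RCov (p', q') V)) :
    ∀ (p q : ℚ) (U : Set (ℚ × ℚ)), p < q → (∀ r ∈ U, r.1 < r.2) →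
      (∀ x : ℝ, (p : ℝ) < x → x < (q : ℝ) →
        ∃ r ∈ U, (r.1 : ℝ) < x ∧ x < (r.2 : ℝ)) →
      RCov (p, q) U := by
  intro p q U _ _ hU
  refine RCov.wi fun p' q' hpp' hp'q' hq'q => ?_
  have hpp'ℝ : (p : ℝ) < p' := by exact_mod_cast hpp'
  have hq'qℝ : (q' : ℝ) < q := by exact_mod_cast hq'q
  have hIcc : ∀ x : ℝ, (p' : ℝ) ≤ x → x ≤ q' → ∃ r ∈ U, (r.1 : ℝ) < x ∧ x < r.2 :=
    fun x h₁ h₂ => hU x (hpp'ℝ.trans_le h₁) (h₂.trans_lt hq'qℝ)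
  obtain ⟨V, hVU, hVfin, hV⟩ := HB p' q' U hIcc
  have hIoo : ∀ x : ℝ, (p' : ℝ) < x → x < q' → ∃ r ∈ V, (r.1 : ℝ) < x ∧ x < r.2 :=
    fun x h₁ h₂ => hV x h₁.le h₂.le
  exact ((hfin p' q' V hVfin hp'q').mp hIoo).mono_s18 hVU
end

section
/- Let S, T be sets, ◁ and ◁' covers on S and T respectively, and ⋉' a positivity on T (satisfying coreflexivity and cotransitivity). If ◁' ⊆ ◁ (i.e. a ◁' U implies a ◁ U) and ⋉' is compatible with ◁ (a ◁ U and a ⋉' V imply some element of U is ⋉'-related to V), then ⋉' is compatible with ◁'. Consequently, if a relation s ⊆ S × T satisfies conditions (FM1)–(FM3) of a formal map and the positivity of T is the greatest one compatible with its cover, then s also satisfies (FM4) and hence is a formal map. -/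
/-!
Compatibility of a positivity with a cover is antitone in the cover, which gives the first claim.
For (FM4), transport the positivity of `S` along `s`: say `b ⋉ₛ V` when some `a` with `s a b`
satisfies `a ⋉ s*V`. This is a positivity on `T`, and (FM3) together with the compatibility on `S`
makes it compatible with the cover of `T`; so it lies below the greatest compatible positivity,
which is exactly (FM4).
-/

namespace FormalTopology

variable {α S T : Type*}

structure IsPositivity (pos : α → Set α → Prop) : Prop where
  corefl : ∀ (a : α) (U : Set α), pos a U → a ∈ U
  cotrans : ∀ (a : α) (U V : Set α), pos a U → (∀ b : α, pos b U → b ∈ V) → pos a V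

def Compatible (cov pos : α → Set α → Prop) : Prop :=
  ∀ (a : α) (U V : Set α), cov a U → pos a V → ∃ b ∈ U, pos b V

theorem Compatible.mono {cov cov' pos : α → Set α → Prop}
    (hle : ∀ (a : α) (U : Set α), cov' a U → cov a U) (h : Compatible cov pos) :
    Compatible cov' pos :=
  fun a U V hcov hpos => h a U V (hle a U hcov) hpos

def corePreimage (s : S → T → Prop) (V : Set T) : Set S :=
  {a | ∀ d : T, s a d → d ∈ V}

def imagePos (s : S → T → Prop) (posS : S → Set S → Prop) (b : T) (V : Set T) : Prop :=
  ∃ a : S, s a b ∧ posS a (corePreimage s V)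

theorem IsPositivity.imagePos {posS : S → Set S → Prop} (h : IsPositivity posS)
    (s : S → T → Prop) : IsPositivity (imagePos s posS) where
  corefl := fun b _ ⟨a, hab, hpos⟩ => h.corefl a _ hpos b hab
  cotrans := fun _ _ _ ⟨a, hab, hpos⟩ hVW =>
    ⟨a, hab, h.cotrans a _ _ hpos fun a' ha' d had => hVW d ⟨a', had, ha'⟩⟩

theorem Compatible.imagePos {covS posS : S → Set S → Prop} {covT : T → Set T → Prop}
    {s : S → T → Prop} (hcompat : Compatible covS posS)
    (hFM3 : ∀ (b : T) (V : Set T), covT b V → ∀ a : S, s a b →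
      covS a {a' : S | ∃ d ∈ V, s a' d}) :
    Compatible covT (imagePos s posS) := by
  rintro b V W hcov ⟨a, hab, hpos⟩
  obtain ⟨a', ⟨d, hdV, had⟩, hpos'⟩ := hcompat a _ _ (hFM3 b V hcov a hab) hpos
  exact ⟨d, hdV, a', had, hpos'⟩

end FormalTopology

theorem compat_of_smaller_cover_and_FM4_general {S T : Type*}
    (covS : S → Set S → Prop) (covT : T → Set T → Prop)
    (posS : S → Set S → Prop) (posT : T → Set T → Prop)
    -- posS is a positivity compatible with covS:
    (hScorefl : ∀ (a : S) (U : Set S), posS a U → a ∈ U)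
    (hScotrans : ∀ (a : S) (U V : Set S), posS a U →
      (∀ b : S, posS b U → b ∈ V) → posS a V)
    (hScompat : ∀ (a : S) (U V : Set S), covS a U → posS a V → ∃ b ∈ U, posS b V)
    -- posT is the greatest positivity compatible with covT:
    (hTgreatest : ∀ pos' : T → Set T → Prop,
      (∀ (b : T) (V : Set T), pos' b V → b ∈ V) →
      (∀ (b : T) (V W : Set T), pos' b V → (∀ c : T, pos' c V → c ∈ W) → pos' b W) →
      (∀ (b : T) (V W : Set T), covT b V → pos' b W → ∃ c ∈ V, pos' c W) →
      ∀ (b : T) (V : Set T), pos' b V → posT b V)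
    -- a relation s satisfying (FM1)-(FM3):
    (s : S → T → Prop)
    (hFM3 : ∀ (b : T) (V : Set T), covT b V → ∀ a : S, s a b →
      covS a {a' : S | ∃ d ∈ V, s a' d}) :
    -- the lemma: any positivity compatible with a cover is compatible with
    -- every smaller cover
    ((∀ (cov cov' : T → Set T → Prop) (pos' : T → Set T → Prop),
      (∀ (b : T) (V : Set T), cov' b V → cov b V) →
      (∀ (b : T) (V W : Set T), cov b V → pos' b W → ∃ c ∈ V, pos' c W) →
      (∀ (b : T) (V W : Set T), cov' b V → pos' b W → ∃ c ∈ V, pos' c W)) ∧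
    -- consequently s satisfies (FM4):
    (∀ (b : T) (V : Set T),
      (∃ a : S, s a b ∧ posS a {a' : S | ∀ d : T, s a' d → d ∈ V}) →
      posT b V)) := by
  refine ⟨fun _ _ _ hle hcompat => FormalTopology.Compatible.mono hle hcompat, ?_⟩
  let posImage := FormalTopology.imagePos s posS
  have hpos : FormalTopology.IsPositivity posImage :=
    (FormalTopology.IsPositivity.mk hScorefl hScotrans).imagePos s
  have hcompat : FormalTopology.Compatible covT posImage :=
    FormalTopology.Compatible.imagePos hScompat hFM3
  exact hTgreatest posImage hpos.corefl hpos.cotrans hcompat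

/-- If `◁' ⊆ ◁` and a positivity `⋉'` is compatible with `◁`, then it is
compatible with `◁'`. Consequently, if a relation `s` satisfies (FM1)–(FM3) and
the positivity of `T` is the greatest one compatible with its cover, then `s`
also satisfies (FM4), hence is a formal map. -/
theorem compat_of_smaller_cover_and_FM4 {S T : Type*}
    (covS : S → Set S → Prop) (covT : T → Set T → Prop)
    (posS : S → Set S → Prop) (posT : T → Set T → Prop)
    -- covS is a cover:
    (hSrefl : ∀ (a : S) (U : Set S), a ∈ U → covS a U)
    (hStrans : ∀ (a : S) (U V : Set S), covS a U → (∀ b ∈ U, covS b V) → covS a V)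
    (hSdownright : ∀ (a : S) (U V : Set S), covS a U → covS a V →
      covS a {c : S | ∃ x ∈ U, ∃ y ∈ V, covS c {x} ∧ covS c {y}})
    -- posS is a positivity compatible with covS:
    (hScorefl : ∀ (a : S) (U : Set S), posS a U → a ∈ U)
    (hScotrans : ∀ (a : S) (U V : Set S), posS a U →
      (∀ b : S, posS b U → b ∈ V) → posS a V)
    (hScompat : ∀ (a : S) (U V : Set S), covS a U → posS a V → ∃ b ∈ U, posS b V)
    -- posT is the greatest positivity compatible with covT:
    (hTcorefl : ∀ (b : T) (V : Set T), posT b V → b ∈ V)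
    (hTcotrans : ∀ (b : T) (V W : Set T), posT b V →
      (∀ c : T, posT c V → c ∈ W) → posT b W)
    (hTcompat : ∀ (b : T) (V W : Set T), covT b V → posT b W → ∃ c ∈ V, posT c W)
    (hTgreatest : ∀ pos' : T → Set T → Prop,
      (∀ (b : T) (V : Set T), pos' b V → b ∈ V) →
      (∀ (b : T) (V W : Set T), pos' b V → (∀ c : T, pos' c V → c ∈ W) → pos' b W) →
      (∀ (b : T) (V W : Set T), covT b V → pos' b W → ∃ c ∈ V, pos' c W) →
      ∀ (b : T) (V : Set T), pos' b V → posT b V)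
    -- a relation s satisfying (FM1)-(FM3):
    (s : S → T → Prop)
    (hFM1 : ∀ a : S, covS a {a' : S | ∃ b : T, s a' b})
    (hFM2 : ∀ b c : T, ∀ a : S,
      (∃ x : S, s x b ∧ covS a {x}) → (∃ y : S, s y c ∧ covS a {y}) →
      covS a {a' : S | ∃ d : T, (covT d {b} ∧ covT d {c}) ∧ s a' d})
    (hFM3 : ∀ (b : T) (V : Set T), covT b V → ∀ a : S, s a b →
      covS a {a' : S | ∃ d ∈ V, s a' d}) :
    -- the lemma: any positivity compatible with a cover is compatible with
    -- every smaller cover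
    ((∀ (cov cov' : T → Set T → Prop) (pos' : T → Set T → Prop),
      (∀ (b : T) (V : Set T), cov' b V → cov b V) →
      (∀ (b : T) (V W : Set T), cov b V → pos' b W → ∃ c ∈ V, pos' c W) →
      (∀ (b : T) (V W : Set T), cov' b V → pos' b W → ∃ c ∈ V, pos' c W)) ∧
    -- consequently s satisfies (FM4):
    (∀ (b : T) (V : Set T),
      (∃ a : S, s a b ∧ posS a {a' : S | ∀ d : T, s a' d → d ∈ V}) →
      posT b V)) :=
  compat_of_smaller_cover_and_FM4_general covS covT posS posT hScorefl hScotrans hScompat hTgreatest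
    s hFM3
end
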